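/- Let Λ be a ring and B a metric space. Let C and C' be ε-chain complexes of geometric modules over B and let f : C → C' be an ε-chain equivalence. Then the algebraic mapping cone C(f) of f is 3ε-contractible; that is, there exist morphisms s_n : C(f)_n → C(f)_{n+1} of geometric modules, each of radius < 3ε, such that d_{n+1}∘s_n + s_{n−1}∘d_n equals the identity on C(f)_n for every n. -/

import Mathlib

/-!
Geometric modules over a metric space `B` with coefficients in a ring `Λ`,
geometric chain complexes, ε-chain maps, ε-chain equivalences, the algebraic
mapping cone, and ε-contractibility.

A geometric chain complex is indexed by `n : ℤ` with differential
`d n : C_{n+1} → C_n`.  The mapping cone `C(f)` of a chain map `f : C → C'`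
has `C(f)_m = C_{m-1} ⊕ C'_m`; here it is encoded by `coneBasis n`, the basis
of `C(f)_{n+1} = C_n ⊕ C'_{n+1}` (as `n` ranges over all of `ℤ` this gives all
degrees of the cone).
-/

/-- Column-finiteness condition: the matrix `f : S → T → Λ` defines a morphism of
geometric (free) modules `Λ[S] → Λ[T]` iff for each fixed `s ∈ S` only finitely many
entries `f s t` are nonzero. -/
def IsGeometricMorphism {Λ : Type*} [Ring Λ] {S T : Type*} (f : S → T → Λ) : Prop :=
  ∀ s : S, (Function.support (f s)).Finite

/-- `f` is an `ε`-morphism of geometric modules from `(Λ[S], φ)` to `(Λ[T], ψ)`: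
it is a morphism (column-finite matrix) and it has radius `< ε`, i.e.
`dist (φ s) (ψ t) < ε` whenever `f s t ≠ 0`. -/
def IsEpsMorphism {Λ : Type*} [Ring Λ] {B : Type*} [MetricSpace B] {S T : Type*}
    (φ : S → B) (ψ : T → B) (f : S → T → Λ) (ε : ℝ) : Prop :=
  IsGeometricMorphism f ∧ ∀ s t, f s t ≠ 0 → dist (φ s) (ψ t) < ε

/-- The composite of geometric morphisms, given by the matrix product
`(g ∘ f)_{su} = Σ_t g_{tu} · f_{st}` (a finite sum when `f` is column-finite). -/
noncomputable def geomComp {Λ : Type*} [Ring Λ] {S T U : Type*}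
    (g : T → U → Λ) (f : S → T → Λ) : S → U → Λ :=
  fun s u => ∑ᶠ t, g t u * f s t

open Classical in
/-- The identity morphism of the geometric module `Λ[S]`. -/
noncomputable def idMor (Λ : Type*) [Ring Λ] (S : Type*) : S → S → Λ :=
  fun a b => if a = b then 1 else 0

/-- A geometric chain complex over `B`: a sequence of geometric modules
`(Λ[basis n], label n)` (indexed by `n : ℤ`) together with morphisms
`d n : Λ[basis (n+1)] → Λ[basis n]` satisfying `d ∘ d = 0`. -/
structure GeomComplex (Λ : Type*) [Ring Λ] (B : Type*) [MetricSpace B] where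
  basis : ℤ → Type*
  label : ∀ n, basis n → B
  d : ∀ n, basis (n + 1) → basis n → Λ
  d_geom : ∀ n, IsGeometricMorphism (d n)
  d_sq : ∀ n, geomComp (d n) (d (n + 1)) = fun _ _ => 0

/-- An `ε`-chain complex: a geometric chain complex all of whose differentials
are `ε`-morphisms. -/
def IsEpsComplex {Λ : Type*} [Ring Λ] {B : Type*} [MetricSpace B]
    (C : GeomComplex Λ B) (ε : ℝ) : Prop :=
  ∀ n, IsEpsMorphism (C.label (n + 1)) (C.label n) (C.d n) ε

/-- A chain map `f : C → C'` of geometric chain complexes: a sequence of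
morphisms of geometric modules `f n : Λ[C.basis n] → Λ[C'.basis n]` commuting
with the differentials. -/
def IsChainMap {Λ : Type*} [Ring Λ] {B : Type*} [MetricSpace B]
    (C C' : GeomComplex Λ B) (f : ∀ n, C.basis n → C'.basis n → Λ) : Prop :=
  (∀ n, IsGeometricMorphism (f n)) ∧
    ∀ n, geomComp (f n) (C.d n) = geomComp (C'.d n) (f (n + 1))

/-- An `ε`-chain map of geometric chain complexes: a chain map each of whose
components is an `ε`-morphism. -/
def IsEpsChainMap {Λ : Type*} [Ring Λ] {B : Type*} [MetricSpace B]
    (C C' : GeomComplex Λ B) (f : ∀ n, C.basis n → C'.basis n → Λ) (ε : ℝ) : Prop :=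
  IsChainMap C C' f ∧ ∀ n, IsEpsMorphism (C.label n) (C'.label n) (f n) ε

/-- An `ε`-chain equivalence `f : C → C'`: an `ε`-chain map admitting an
`ε`-chain map `g : C' → C` and chain homotopies `h`, `h'` of radius `< ε` with
`∂ ∘ h + h ∘ ∂ = id − g∘f` and `∂' ∘ h' + h' ∘ ∂' = id − f∘g` in every degree
(the degree-`(n+1)` equation is stated for every `n : ℤ`, which covers all
degrees). -/
def IsEpsChainEquiv {Λ : Type*} [Ring Λ] {B : Type*} [MetricSpace B]
    (C C' : GeomComplex Λ B) (f : ∀ n, C.basis n → C'.basis n → Λ) (ε : ℝ) : Prop :=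
  IsEpsChainMap C C' f ε ∧
    ∃ g : ∀ n, C'.basis n → C.basis n → Λ, IsEpsChainMap C' C g ε ∧
      ∃ h : ∀ n, C.basis n → C.basis (n + 1) → Λ,
        ∃ h' : ∀ n, C'.basis n → C'.basis (n + 1) → Λ,
          (∀ n, IsEpsMorphism (C.label n) (C.label (n + 1)) (h n) ε) ∧
          (∀ n, IsEpsMorphism (C'.label n) (C'.label (n + 1)) (h' n) ε) ∧
          (∀ n, geomComp (C.d (n + 1)) (h (n + 1)) + geomComp (h n) (C.d n) =
            idMor Λ (C.basis (n + 1)) - geomComp (g (n + 1)) (f (n + 1))) ∧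
          (∀ n, geomComp (C'.d (n + 1)) (h' (n + 1)) + geomComp (h' n) (C'.d n) =
            idMor Λ (C'.basis (n + 1)) - geomComp (f (n + 1)) (g (n + 1)))

section Cone

variable {Λ : Type*} [Ring Λ] {B : Type*} [MetricSpace B]

/-- Basis of the algebraic mapping cone `C(f)` of `f : C → C'` in degree `n + 1`:
`C(f)_{n+1} = C_n ⊕ C'_{n+1}`. -/
abbrev coneBasis (C C' : GeomComplex Λ B) (n : ℤ) : Type _ :=
  C.basis n ⊕ C'.basis (n + 1)

/-- Labelling map of the mapping cone in degree `n + 1`. -/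
def coneLabel (C C' : GeomComplex Λ B) (n : ℤ) : coneBasis C C' n → B :=
  Sum.elim (C.label n) (C'.label (n + 1))

/-- Differential of the mapping cone `C(f)`, from degree `n + 2` to degree
`n + 1`: `d (c, c') = (−∂ c, f c + ∂' c')`. -/
def coneD (C C' : GeomComplex Λ B) (f : ∀ n, C.basis n → C'.basis n → Λ) (n : ℤ) :
    coneBasis C C' (n + 1) → coneBasis C C' n → Λ
  | Sum.inl c, Sum.inl c₀ => - C.d n c c₀
  | Sum.inl c, Sum.inr c' => f (n + 1) c c'
  | Sum.inr _, Sum.inl _ => 0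
  | Sum.inr c', Sum.inr c'₀ => C'.d (n + 1) c' c'₀

end Cone

/-!
On the cone, the block homotopy `s₀ = [[-h, 0], [g, h']]` built from the homotopy inverse `g` and
the homotopies `h`, `h'` satisfies `d s₀ + s₀ d = 1 - E`, where the only nonzero block of `E` is
`f h - h' f`, from the `C`-summand to the `C'`-summand; the other off-diagonal block `d' g - g d`
vanishes because `g` is a chain map. Hence `E² = 0`, and as `d² = 0` forces `E` to commute with
`d`, the perturbed homotopy `s = (1 + E) s₀` satisfies `d s + s d = (1 - E)(1 + E) = 1`. Radii add
under composition: `s₀` has radius `< ε` and `E` radius `< 2ε`, so `s` has radius `< 3ε`.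
-/

open Function

section Matrices

variable {Λ : Type*} [Ring Λ] {S T U V : Type*}

theorem geomComp_eq_sum (g : T → U → Λ) (f : S → T → Λ) {s : S} {F : Finset T}
    (hF : support (f s) ⊆ F) (u : U) : geomComp g f s u = ∑ t ∈ F, g t u * f s t :=
  finsum_eq_sum_of_support_subset _ fun _ ht => hF (right_ne_zero_of_mul ht)

theorem exists_ne_zero_of_geomComp_ne_zero {g : T → U → Λ} {f : S → T → Λ} {s : S} {u : U}
    (h : geomComp g f s u ≠ 0) : ∃ t, g t u ≠ 0 ∧ f s t ≠ 0 := by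
  obtain ⟨t, ht⟩ : ∃ t, g t u * f s t ≠ 0 := by
    by_contra! hc
    exact h (finsum_eq_zero_of_forall_eq_zero hc)
  exact ⟨t, left_ne_zero_of_mul ht, right_ne_zero_of_mul ht⟩

theorem IsGeometricMorphism.geomComp {g : T → U → Λ} {f : S → T → Λ}
    (hg : IsGeometricMorphism g) (hf : IsGeometricMorphism f) :
    IsGeometricMorphism (geomComp g f) := fun s =>
  ((hf s).biUnion fun t _ => hg t).subset fun _ hu =>
    let ⟨_, hgt, hft⟩ := exists_ne_zero_of_geomComp_ne_zero hu
    Set.mem_biUnion hft hgt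

theorem IsGeometricMorphism.add {f₁ f₂ : S → T → Λ} (h₁ : IsGeometricMorphism f₁)
    (h₂ : IsGeometricMorphism f₂) : IsGeometricMorphism (f₁ + f₂) := fun s =>
  HasFiniteSupport.add (h₁ s) (h₂ s)

theorem IsGeometricMorphism.neg {f : S → T → Λ} (hf : IsGeometricMorphism f) :
    IsGeometricMorphism (-f) := fun s =>
  HasFiniteSupport.neg (hf s)

theorem isGeometricMorphism_zero : IsGeometricMorphism (0 : S → T → Λ) := fun _ =>
  hasFiniteSupport_zero

variable (Λ S T) in
def geomMorphisms : AddSubgroup (S → T → Λ) where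
  carrier := {f | IsGeometricMorphism f}
  add_mem' := IsGeometricMorphism.add
  zero_mem' := isGeometricMorphism_zero
  neg_mem' := IsGeometricMorphism.neg

theorem isGeometricMorphism_idMor : IsGeometricMorphism (idMor Λ S) := by
  classical
  exact fun s => (Set.finite_singleton s).subset fun t ht => by
    by_contra hts
    exact ht (if_neg fun h => hts h.symm)

theorem geomComp_idMor_left (f : S → T → Λ) : geomComp (idMor Λ T) f = f := by
  classical
  funext s u
  rw [geomComp, finsum_eq_single _ u fun t ht => by simp [idMor, ht]]
  simp [idMor]

theorem geomComp_idMor_right (g : S → T → Λ) : geomComp g (idMor Λ S) = g := by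
  classical
  funext s u
  rw [geomComp, finsum_eq_single _ s fun t ht => by simp [idMor, Ne.symm ht]]
  simp [idMor]

theorem geomComp_add_left (g₁ g₂ : T → U → Λ) {f : S → T → Λ} (hf : IsGeometricMorphism f) :
    geomComp (g₁ + g₂) f = geomComp g₁ f + geomComp g₂ f := by
  funext s u
  simp only [geomComp, Pi.add_apply, add_mul]
  exact finsum_add_distrib ((hf s).subset fun _ ht => right_ne_zero_of_mul ht)
    ((hf s).subset fun _ ht => right_ne_zero_of_mul ht)

theorem geomComp_add_right (g : T → U → Λ) {f₁ f₂ : S → T → Λ}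
    (h₁ : IsGeometricMorphism f₁) (h₂ : IsGeometricMorphism f₂) :
    geomComp g (f₁ + f₂) = geomComp g f₁ + geomComp g f₂ := by
  funext s u
  simp only [geomComp, Pi.add_apply, mul_add]
  exact finsum_add_distrib ((h₁ s).subset fun _ ht => right_ne_zero_of_mul ht)
    ((h₂ s).subset fun _ ht => right_ne_zero_of_mul ht)

@[simp]
theorem geomComp_zero_left (f : S → T → Λ) : geomComp (0 : T → U → Λ) f = 0 := by
  funext s u
  simp [geomComp]

@[simp]
theorem geomComp_zero_right (g : T → U → Λ) : geomComp g (0 : S → T → Λ) = 0 := by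
  funext s u
  simp [geomComp]

@[simp]
theorem geomComp_neg_left (g : T → U → Λ) (f : S → T → Λ) :
    geomComp (-g) f = -geomComp g f := by
  funext s u
  simp only [geomComp, Pi.neg_apply, neg_mul]
  exact finsum_neg_distrib _

@[simp]
theorem geomComp_neg_right (g : T → U → Λ) (f : S → T → Λ) :
    geomComp g (-f) = -geomComp g f := by
  funext s u
  simp only [geomComp, Pi.neg_apply, mul_neg]
  exact finsum_neg_distrib _

theorem geomComp_assoc (k : U → V → Λ) {g : T → U → Λ} {f : S → T → Λ}
    (hg : IsGeometricMorphism g) (hf : IsGeometricMorphism f) :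
    geomComp k (geomComp g f) = geomComp (geomComp k g) f := by
  classical
  funext s v
  set F := (hf s).toFinset
  set G := F.biUnion fun t => (hg t).toFinset
  have hFG : ∀ t ∈ F, support (g t) ⊆ G := fun t ht u hu =>
    Finset.mem_biUnion.2 ⟨t, ht, (hg t).mem_toFinset.2 hu⟩
  have hG : support (geomComp g f s) ⊆ G := fun u hu =>
    let ⟨t, hgt, hft⟩ := exists_ne_zero_of_geomComp_ne_zero hu
    hFG t ((hf s).mem_toFinset.2 hft) hgt
  have hF : support (f s) ⊆ F := fun t ht => (hf s).mem_toFinset.2 ht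
  calc geomComp k (geomComp g f) s v
      = ∑ u ∈ G, ∑ t ∈ F, k u v * (g t u * f s t) := by
        rw [geomComp_eq_sum _ _ hG]
        exact Finset.sum_congr rfl fun u _ => by rw [geomComp_eq_sum _ _ hF, Finset.mul_sum]
    _ = ∑ t ∈ F, (∑ u ∈ G, k u v * g t u) * f s t := by
        rw [Finset.sum_comm]
        simp only [Finset.sum_mul, mul_assoc]
    _ = geomComp (geomComp k g) f s v := by
        rw [geomComp_eq_sum _ _ hF]
        exact Finset.sum_congr rfl fun t ht => by rw [geomComp_eq_sum _ _ (hFG t ht)]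

end Matrices

section Blocks

variable {Λ : Type*} [Ring Λ] {S T U V W X : Type*}

def blockMor (a : S → U → Λ) (b : S → V → Λ) (c : T → U → Λ) (e : T → V → Λ) :
    S ⊕ T → U ⊕ V → Λ :=
  Sum.elim (fun s => Sum.elim (a s) (b s)) (fun t => Sum.elim (c t) (e t))

theorem Function.HasFiniteSupport.sumElim {f : S → Λ} {g : T → Λ} (hf : HasFiniteSupport f)
    (hg : HasFiniteSupport g) : HasFiniteSupport (Sum.elim f g) :=
  ((hf.image Sum.inl).union (hg.image Sum.inr)).subset <| by
    rintro (s | t) h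
    exacts [Or.inl ⟨s, h, rfl⟩, Or.inr ⟨t, h, rfl⟩]

theorem IsGeometricMorphism.blockMor {a : S → U → Λ} {b : S → V → Λ} {c : T → U → Λ}
    {e : T → V → Λ} (ha : IsGeometricMorphism a) (hb : IsGeometricMorphism b)
    (hc : IsGeometricMorphism c) (he : IsGeometricMorphism e) :
    IsGeometricMorphism (blockMor a b c e) := by
  rintro (s | t)
  exacts [HasFiniteSupport.sumElim (ha s) (hb s), HasFiniteSupport.sumElim (hc t) (he t)]

theorem geomComp_sumElim (g : U ⊕ V → W → Λ) {f₁ : S → U → Λ} {f₂ : S → V → Λ}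
    (h₁ : IsGeometricMorphism f₁) (h₂ : IsGeometricMorphism f₂) (s : S) (w : W) :
    geomComp g (fun s => Sum.elim (f₁ s) (f₂ s)) s w =
      geomComp (fun u => g (.inl u)) f₁ s w + geomComp (fun v => g (.inr v)) f₂ s w := by
  classical
  have hF : support (f₁ s) ⊆ (h₁ s).toFinset := fun _ hu => (h₁ s).mem_toFinset.2 hu
  have hG : support (f₂ s) ⊆ (h₂ s).toFinset := fun _ hv => (h₂ s).mem_toFinset.2 hv
  have hFG : support (Sum.elim (f₁ s) (f₂ s)) ⊆ (h₁ s).toFinset.disjSum (h₂ s).toFinset := by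
    rintro (u | v) h
    exacts [Finset.inl_mem_disjSum.2 (hF h), Finset.inr_mem_disjSum.2 (hG h)]
  rw [geomComp_eq_sum g (fun s => Sum.elim (f₁ s) (f₂ s)) hFG, Finset.sum_disjSum,
    geomComp_eq_sum _ _ hF, geomComp_eq_sum _ _ hG]
  rfl

theorem geomComp_blockMor_blockMor (a : U → W → Λ) (b : U → X → Λ) (c : V → W → Λ)
    (e : V → X → Λ) {a' : S → U → Λ} {b' : S → V → Λ} {c' : T → U → Λ} {e' : T → V → Λ}
    (ha' : IsGeometricMorphism a') (hb' : IsGeometricMorphism b')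
    (hc' : IsGeometricMorphism c') (he' : IsGeometricMorphism e') :
    geomComp (blockMor a b c e) (blockMor a' b' c' e') =
      blockMor (geomComp a a' + geomComp c b') (geomComp b a' + geomComp e b')
        (geomComp a c' + geomComp c e') (geomComp b c' + geomComp e e') := by
  funext x y
  rcases x with s | t
  · exact (geomComp_sumElim _ ha' hb' s y).trans (by rcases y with w | w <;> rfl)
  · exact (geomComp_sumElim _ hc' he' t y).trans (by rcases y with w | w <;> rfl)

theorem blockMor_add (a a' : S → U → Λ) (b b' : S → V → Λ) (c c' : T → U → Λ)
    (e e' : T → V → Λ) :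
    blockMor a b c e + blockMor a' b' c' e' = blockMor (a + a') (b + b') (c + c') (e + e') := by
  funext x y
  rcases x with _ | _ <;> rcases y with _ | _ <;> rfl

theorem blockMor_sub (a a' : S → U → Λ) (b b' : S → V → Λ) (c c' : T → U → Λ)
    (e e' : T → V → Λ) :
    blockMor a b c e - blockMor a' b' c' e' = blockMor (a - a') (b - b') (c - c') (e - e') := by
  funext x y
  rcases x with _ | _ <;> rcases y with _ | _ <;> rfl

theorem blockMor_zero : blockMor (0 : S → U → Λ) (0 : S → V → Λ) (0 : T → U → Λ) 0 = 0 := by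
  funext x y
  rcases x with _ | _ <;> rcases y with _ | _ <;> rfl

theorem idMor_sum : idMor Λ (S ⊕ T) = blockMor (idMor Λ S) 0 0 (idMor Λ T) := by
  classical
  funext x y
  rcases x with x | x <;> rcases y with y | y
  · exact ite_congr (propext Sum.inl_injective.eq_iff) (fun _ => rfl) fun _ => rfl
  · exact if_neg Sum.inl_ne_inr
  · exact if_neg Sum.inr_ne_inl
  · exact ite_congr (propext Sum.inr_injective.eq_iff) (fun _ => rfl) fun _ => rfl

end Blocks

section Radius

variable {Λ : Type*} [Ring Λ] {B : Type*} [MetricSpace B] {S T U V : Type*}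
  {φ : S → B} {ψ : T → B} {χ : U → B} {ω : V → B} {ε ε' : ℝ}

theorem IsEpsMorphism.mono {f : S → T → Λ} (hf : IsEpsMorphism φ ψ f ε) (h : ε ≤ ε') :
    IsEpsMorphism φ ψ f ε' :=
  ⟨hf.1, fun s t hst => (hf.2 s t hst).trans_le h⟩

theorem IsEpsMorphism.geomComp {g : T → U → Λ} {f : S → T → Λ} (hg : IsEpsMorphism ψ χ g ε')
    (hf : IsEpsMorphism φ ψ f ε) : IsEpsMorphism φ χ (geomComp g f) (ε + ε') := by
  refine ⟨hg.1.geomComp hf.1, fun s u hsu => ?_⟩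
  obtain ⟨t, hgt, hft⟩ := exists_ne_zero_of_geomComp_ne_zero hsu
  calc dist (φ s) (χ u) ≤ dist (φ s) (ψ t) + dist (ψ t) (χ u) := dist_triangle _ _ _
    _ < ε + ε' := add_lt_add (hf.2 s t hft) (hg.2 t u hgt)

theorem IsEpsMorphism.add {f₁ f₂ : S → T → Λ} (h₁ : IsEpsMorphism φ ψ f₁ ε)
    (h₂ : IsEpsMorphism φ ψ f₂ ε) : IsEpsMorphism φ ψ (f₁ + f₂) ε := by
  refine ⟨h₁.1.add h₂.1, fun s t hst => ?_⟩
  by_cases h : f₁ s t = 0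
  · exact h₂.2 s t fun h' => hst (by simp [h, h'])
  · exact h₁.2 s t h

theorem IsEpsMorphism.neg {f : S → T → Λ} (hf : IsEpsMorphism φ ψ f ε) :
    IsEpsMorphism φ ψ (-f) ε :=
  ⟨hf.1.neg, fun s t hst => hf.2 s t (neg_ne_zero.1 hst)⟩

theorem IsEpsMorphism.sub {f₁ f₂ : S → T → Λ} (h₁ : IsEpsMorphism φ ψ f₁ ε)
    (h₂ : IsEpsMorphism φ ψ f₂ ε) : IsEpsMorphism φ ψ (f₁ - f₂) ε := by
  simpa only [sub_eq_add_neg] using h₁.add h₂.neg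

theorem isEpsMorphism_zero : IsEpsMorphism φ ψ (0 : S → T → Λ) ε :=
  ⟨isGeometricMorphism_zero, fun _ _ h => absurd rfl h⟩

theorem isEpsMorphism_idMor (hε : 0 < ε) : IsEpsMorphism φ φ (idMor Λ S) ε := by
  classical
  refine ⟨isGeometricMorphism_idMor, fun s t hst => ?_⟩
  obtain rfl : s = t := of_not_not fun h => hst (if_neg h)
  simpa using hε

theorem IsEpsMorphism.blockMor {a : S → U → Λ} {b : S → V → Λ} {c : T → U → Λ}
    {e : T → V → Λ} (ha : IsEpsMorphism φ χ a ε) (hb : IsEpsMorphism φ ω b ε)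
    (hc : IsEpsMorphism ψ χ c ε) (he : IsEpsMorphism ψ ω e ε) :
    IsEpsMorphism (Sum.elim φ ψ) (Sum.elim χ ω) (blockMor a b c e) ε := by
  refine ⟨.blockMor ha.1 hb.1 hc.1 he.1, ?_⟩
  rintro (s | t) (u | v)
  exacts [ha.2 s u, hb.2 s v, hc.2 t u, he.2 t v]

end Radius

open CategoryTheory

universe u

/-- Geometric modules with their labels forgotten, which play no role in the matrix algebra. -/
structure GeomMod (Λ : Type*) [Ring Λ] : Type (u + 1) where
  carrier : Type u

namespace GeomMod

variable {Λ : Type*} [Ring Λ]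

abbrev of (Λ : Type*) [Ring Λ] (S : Type u) : GeomMod.{u} Λ := ⟨S⟩

noncomputable instance : Category (GeomMod.{u} Λ) where
  Hom X Y := geomMorphisms Λ X.carrier Y.carrier
  id X := ⟨idMor Λ X.carrier, isGeometricMorphism_idMor⟩
  comp f g := ⟨geomComp g.1 f.1, IsGeometricMorphism.geomComp g.2 f.2⟩
  id_comp f := Subtype.ext (geomComp_idMor_right f.1)
  comp_id f := Subtype.ext (geomComp_idMor_left f.1)
  assoc f g k := Subtype.ext (geomComp_assoc k.1 g.2 f.2)

noncomputable instance : Preadditive (GeomMod.{u} Λ) where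
  homGroup X Y := inferInstanceAs (AddCommGroup (geomMorphisms Λ X.carrier Y.carrier))
  add_comp _ _ _ f f' g := Subtype.ext (geomComp_add_right g.1 f.2 f'.2)
  comp_add _ _ _ f g g' := Subtype.ext (geomComp_add_left g.1 g'.1 f.2)

end GeomMod

section Perturbation

open Preadditive Limits

variable {𝒞 : Type*} [Category 𝒞] [Preadditive 𝒞] {P : ℤ → 𝒞} {D : ∀ n, P (n + 1) ⟶ P n}
  {s : ∀ n, P n ⟶ P (n + 1)} {E : ∀ n, P (n + 1) ⟶ P (n + 1)}

/-- `E = 𝟙 - (s ≫ D + D ≫ s)` commutes with `D` because `D ≫ D = 0`, so for the corrected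
homotopy `s ≫ (𝟙 + E)` the defect becomes `(𝟙 - E) ≫ (𝟙 + E) = 𝟙 - E ≫ E`. -/
theorem contraction_of_defect_sq_eq_zero (hD : ∀ n, D (n + 1) ≫ D n = 0)
    (hs : ∀ n, s (n + 1) ≫ D (n + 1) + D n ≫ s n = 𝟙 _ - E n) (hE : ∀ n, E n ≫ E n = 0)
    (n : ℤ) :
    (s (n + 1) ≫ (𝟙 _ + E (n + 1))) ≫ D (n + 1) + D n ≫ s n ≫ (𝟙 _ + E n) = 𝟙 _ := by
  have hE_eq : ∀ n, E n = 𝟙 _ - (s (n + 1) ≫ D (n + 1) + D n ≫ s n) := fun n => by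
    rw [hs, sub_sub_cancel]
  have hED : E (n + 1) ≫ D (n + 1) = D (n + 1) ≫ E n := by
    rw [hE_eq, hE_eq]
    simp only [sub_comp, comp_sub, add_comp, comp_add, Category.assoc, Category.id_comp,
      Category.comp_id, hD, reassoc_of% hD, comp_zero, zero_comp]
    abel
  calc (s (n + 1) ≫ (𝟙 _ + E (n + 1))) ≫ D (n + 1) + D n ≫ s n ≫ (𝟙 _ + E n)
      = (s (n + 1) ≫ D (n + 1) + D n ≫ s n) ≫ (𝟙 _ + E n) := by
        simp only [add_comp, comp_add, Category.assoc, Category.comp_id, hED]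
        abel
    _ = 𝟙 _ := by
        rw [hs, sub_comp, comp_add, comp_add, hE]
        simp

end Perturbation

section Cone

variable {Λ : Type*} [Ring Λ] {B : Type*} [MetricSpace B] (C C' : GeomComplex Λ B)
  (f : ∀ n, C.basis n → C'.basis n → Λ) (g : ∀ n, C'.basis n → C.basis n → Λ)
  (h : ∀ n, C.basis n → C.basis (n + 1) → Λ) (h' : ∀ n, C'.basis n → C'.basis (n + 1) → Λ)

@[simp]
theorem GeomComplex.geomComp_d_d (n : ℤ) : geomComp (C.d n) (C.d (n + 1)) = 0 :=
  C.d_sq n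

theorem coneD_eq_blockMor (n : ℤ) :
    coneD C C' f n = blockMor (-C.d n) (f (n + 1)) 0 (C'.d (n + 1)) := by
  funext x y
  rcases x with _ | _ <;> rcases y with _ | _ <;> rfl

def coneHomotopy (n : ℤ) : coneBasis C C' n → coneBasis C C' (n + 1) → Λ :=
  blockMor (-h n) 0 (g (n + 1)) (h' (n + 1))

noncomputable def coneDefect (n : ℤ) : coneBasis C C' (n + 1) → coneBasis C C' (n + 1) → Λ :=
  blockMor 0 (geomComp (f (n + 1 + 1)) (h (n + 1)) - geomComp (h' (n + 1)) (f (n + 1))) 0 0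

variable {C C' f g h h'}

theorem isGeometricMorphism_coneD (hf : ∀ n, IsGeometricMorphism (f n)) (n : ℤ) :
    IsGeometricMorphism (coneD C C' f n) :=
  coneD_eq_blockMor C C' f n ▸ .blockMor (C.d_geom n).neg (hf (n + 1)) isGeometricMorphism_zero
    (C'.d_geom (n + 1))

theorem geomComp_coneD_coneD (hf : IsChainMap C C' f) (n : ℤ) :
    geomComp (coneD C C' f n) (coneD C C' f (n + 1)) = 0 := by
  rw [coneD_eq_blockMor, coneD_eq_blockMor, geomComp_blockMor_blockMor _ _ _ _
    (C.d_geom (n + 1)).neg (hf.1 (n + 1 + 1)) isGeometricMorphism_zero (C'.d_geom (n + 1 + 1)),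
    ← blockMor_zero]
  congr 1 <;> simp [hf.2]

theorem coneD_homotopy_eq_idMor_sub_coneDefect (hg : IsChainMap C' C g)
    (hf : ∀ n, IsGeometricMorphism (f n)) (hh_geom : ∀ n, IsGeometricMorphism (h n)) (hh'_geom : ∀ n, IsGeometricMorphism (h' n))
    (hh : ∀ n, geomComp (C.d (n + 1)) (h (n + 1)) + geomComp (h n) (C.d n) =
      idMor Λ (C.basis (n + 1)) - geomComp (g (n + 1)) (f (n + 1)))
    (hh' : ∀ n, geomComp (C'.d (n + 1)) (h' (n + 1)) + geomComp (h' n) (C'.d n) =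
      idMor Λ (C'.basis (n + 1)) - geomComp (f (n + 1)) (g (n + 1))) (n : ℤ) :
    geomComp (coneD C C' f (n + 1)) (coneHomotopy C C' g h h' (n + 1)) +
        geomComp (coneHomotopy C C' g h h' n) (coneD C C' f n) =
      idMor Λ (coneBasis C C' (n + 1)) - coneDefect C C' f h h' n := by
  rw [coneD_eq_blockMor, coneD_eq_blockMor, coneHomotopy, coneHomotopy, coneDefect,
    geomComp_blockMor_blockMor _ _ _ _ (hh_geom (n + 1)).neg isGeometricMorphism_zero
      (hg.1 (n + 1 + 1)) (hh'_geom (n + 1 + 1)),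
    geomComp_blockMor_blockMor _ _ _ _ (C.d_geom n).neg (hf (n + 1)) isGeometricMorphism_zero
      (C'.d_geom (n + 1)), blockMor_add, idMor_sum, blockMor_sub]
  congr 1
  · simp only [geomComp_neg_right, geomComp_neg_left, neg_neg, geomComp_zero_right, add_zero,
      sub_zero]
    rw [← add_assoc, hh n, sub_add_cancel]
  · simp only [geomComp_neg_right, geomComp_zero_right, add_zero, geomComp_zero_left, zero_sub]
    abel
  · simp [hg.2]
  · simp only [geomComp_zero_right, zero_add, sub_zero]
    rw [add_assoc (geomComp _ _), hh' (n + 1), add_sub_cancel]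

theorem geomComp_coneDefect_coneDefect (n : ℤ) :
    geomComp (coneDefect C C' f h h' n) (coneDefect C C' f h h' n) = 0 := by
  funext x y
  refine finsum_eq_zero_of_forall_eq_zero fun z => ?_
  rcases x with _ | _ <;> rcases y with _ | _ <;> rcases z with _ | _ <;>
    simp [coneDefect, blockMor]

variable {ε : ℝ}

theorem isEpsMorphism_coneHomotopy (hg : ∀ n, IsEpsMorphism (C'.label n) (C.label n) (g n) ε)
    (hh : ∀ n, IsEpsMorphism (C.label n) (C.label (n + 1)) (h n) ε)
    (hh' : ∀ n, IsEpsMorphism (C'.label n) (C'.label (n + 1)) (h' n) ε) (n : ℤ) :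
    IsEpsMorphism (coneLabel C C' n) (coneLabel C C' (n + 1)) (coneHomotopy C C' g h h' n) ε :=
  (hh n).neg.blockMor isEpsMorphism_zero (hg (n + 1)) (hh' (n + 1))

theorem isEpsMorphism_coneDefect (hf : ∀ n, IsEpsMorphism (C.label n) (C'.label n) (f n) ε)
    (hh : ∀ n, IsEpsMorphism (C.label n) (C.label (n + 1)) (h n) ε)
    (hh' : ∀ n, IsEpsMorphism (C'.label n) (C'.label (n + 1)) (h' n) ε) (n : ℤ) :
    IsEpsMorphism (coneLabel C C' (n + 1)) (coneLabel C C' (n + 1)) (coneDefect C C' f h h' n)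
      (ε + ε) :=
  isEpsMorphism_zero.blockMor (((hf (n + 1 + 1)).geomComp (hh (n + 1))).sub
    ((hh' (n + 1)).geomComp (hf (n + 1)))) isEpsMorphism_zero isEpsMorphism_zero

end Cone

theorem cone_of_epsChainEquiv_is_three_eps_contractible_general
    {Λ : Type*} [Ring Λ] {B : Type*} [MetricSpace B]
    (C C' : GeomComplex Λ B) (f : ∀ n, C.basis n → C'.basis n → Λ)
    {ε : ℝ} (hε : 0 < ε)
    (hf : IsEpsChainEquiv C C' f ε) :
    ∃ s : ∀ n, coneBasis C C' n → coneBasis C C' (n + 1) → Λ,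
      (∀ n, IsEpsMorphism (coneLabel C C' n) (coneLabel C C' (n + 1)) (s n) (3 * ε)) ∧
      ∀ n, geomComp (coneD C C' f (n + 1)) (s (n + 1)) + geomComp (s n) (coneD C C' f n) =
        idMor Λ (coneBasis C C' (n + 1)) := by
  obtain ⟨⟨hf, hf_eps⟩, g, ⟨hg, hg_eps⟩, h, h', hh_eps, hh'_eps, hh, hh'⟩ := hf
  have homotopy_eps := isEpsMorphism_coneHomotopy hg_eps hh_eps hh'_eps
  have defect_eps := isEpsMorphism_coneDefect hf_eps hh_eps hh'_eps
  refine ⟨fun n => geomComp (idMor Λ _ + coneDefect C C' f h h' n) (coneHomotopy C C' g h h' n),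
    fun n => ?_, fun n => ?_⟩
  · refine (((isEpsMorphism_idMor (by positivity)).add (defect_eps n)).geomComp
      (homotopy_eps n)).mono ?_
    linarith
  · let P n := GeomMod.of Λ (coneBasis C C' n)
    let D n : P (n + 1) ⟶ P n := ⟨coneD C C' f n, isGeometricMorphism_coneD hf.1 n⟩
    let s n : P n ⟶ P (n + 1) := ⟨coneHomotopy C C' g h h' n, (homotopy_eps n).1⟩
    let E n : P (n + 1) ⟶ P (n + 1) := ⟨coneDefect C C' f h h' n, (defect_eps n).1⟩
    exact congrArg Subtype.val <| contraction_of_defect_sq_eq_zero (D := D) (s := s) (E := E)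
      (fun n => Subtype.ext (geomComp_coneD_coneD hf n))
      (fun n => Subtype.ext (coneD_homotopy_eq_idMor_sub_coneDefect hg hf.1 (fun n => (hh_eps n).1)
        (fun n => (hh'_eps n).1) hh hh' n))
      (fun n => Subtype.ext (geomComp_coneDefect_coneDefect n)) n

/-- Let `C` and `C'` be `ε`-chain complexes of geometric modules
over a metric space `B` and let `f : C → C'` be an `ε`-chain equivalence.  Then
the algebraic mapping cone `C(f)` of `f` is `3ε`-contractible: there exist
morphisms `s` of geometric modules raising the degree of the cone by one, each
of radius `< 3ε` (i.e. each a `3ε`-morphism for the cone labels), such that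
`d ∘ s + s ∘ d = id` in every degree of the cone (the equation on
`C(f)_{n+2} = coneBasis (n+1)` is stated for every `n : ℤ`, covering all
degrees). -/
theorem cone_of_epsChainEquiv_is_three_eps_contractible
    {Λ : Type*} [Ring Λ] {B : Type*} [MetricSpace B]
    (C C' : GeomComplex Λ B) (f : ∀ n, C.basis n → C'.basis n → Λ)
    {ε : ℝ} (hε : 0 < ε)
    (hC : IsEpsComplex C ε) (hC' : IsEpsComplex C' ε)
    (hf : IsEpsChainEquiv C C' f ε) :
    ∃ s : ∀ n, coneBasis C C' n → coneBasis C C' (n + 1) → Λ,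
      (∀ n, IsEpsMorphism (coneLabel C C' n) (coneLabel C C' (n + 1)) (s n) (3 * ε)) ∧
      ∀ n, geomComp (coneD C C' f (n + 1)) (s (n + 1)) + geomComp (s n) (coneD C C' f n) =
        idMor Λ (coneBasis C C' (n + 1)) :=
  cone_of_epsChainEquiv_is_three_eps_contractible_general C C' f hε hf
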